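/- The unique solution g(u,h) of the functional equation g(u,h) g(u+\kappa h,h) = 1/((1-e^{-u-h})(1-e^{-u+h})(1-e^{-u-\kappa h})(1-e^{-u+\kappa h})) with g(u,0) = (1-e^{-u})^{-2} admits the form g(u,h) = \sum_{l\ge 0} p_l(e^{-u})/(1-e^{-u})^{r_l} h^l for some polynomials p_l(z) in C[z] and nonnegative integers r_l. -/

import Mathlib

/-!
All coefficients of `g` lie in the subalgebra `ℂ[e^{-u}, (1 - e^{-u})⁻¹]` of `ℂ((u))`. This
subalgebra is stable under `d/du`, because `(e^{-u})' = -e^{-u}` and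
`((1 - e^{-u})⁻¹)' = -e^{-u} (1 - e^{-u})⁻²`; hence it contains every coefficient of the
right-hand side. The Taylor shift changes the `n`-th coefficient of `g` only by derivatives of
lower ones, so the `n`-th coefficient of `g(u,h) g(u+κh,h)` is `2 g₀ gₙ` plus terms in
`g₀, …, gₙ₋₁`. Since `g₀⁻¹ = (1 - e^{-u})²` is in the subalgebra too, induction on `n` puts every
`gₙ` in it, and its elements are exactly the `p(e^{-u}) (1 - e^{-u})^{-r}`.
-/

noncomputable section

/-- Formal derivative of a power series. -/
def psDeriv (f : PowerSeries ℂ) : PowerSeries ℂ :=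
  PowerSeries.mk fun n => ((n : ℂ) + 1) * PowerSeries.coeff (n + 1) f

/-- Formal derivative of a Laurent series. -/
def lsDeriv (f : LaurentSeries ℂ) : LaurentSeries ℂ :=
  HahnSeries.single (f.order - 1) ((f.order : ℤ) : ℂ) *
      HahnSeries.ofPowerSeries ℤ ℂ f.powerSeriesPart
    + HahnSeries.single f.order (1 : ℂ) *
      HahnSeries.ofPowerSeries ℤ ℂ (psDeriv f.powerSeriesPart)

/-- The formal Taylor shift `g(u,h) ↦ g(u + κh, h)` on `ℂ((u))[[h]]`. -/
def taylorShift (κ : ℂ) (G : PowerSeries (LaurentSeries ℂ)) : PowerSeries (LaurentSeries ℂ) :=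
  PowerSeries.mk fun k => ∑ m ∈ Finset.range (k + 1),
    (κ ^ m / (m.factorial : ℂ)) • lsDeriv^[m] (PowerSeries.coeff (k - m) G)

/-- `e^{-u} ∈ ℂ[[u]] ⊆ ℂ((u))`. -/
def expNegU : LaurentSeries ℂ :=
  HahnSeries.ofPowerSeries ℤ ℂ (PowerSeries.rescale (-1) (PowerSeries.exp ℂ))

/-- `(1 - e^{-u+ah})⁻¹ ∈ ℂ((u))[[h]]`, expanded by the Taylor formula
`∑_{l ≥ 0} (ah)^l/l! · ∂_u^l (1 - e^{-u})⁻¹`. -/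
def shiftInv (a : ℂ) : PowerSeries (LaurentSeries ℂ) :=
  PowerSeries.mk fun l =>
    (a ^ l / (l.factorial : ℂ)) • lsDeriv^[l] ((1 - expNegU)⁻¹)

section Adjoin

open Polynomial Algebra

variable {R A : Type*} [CommRing R] [CommRing A] [Algebra R A]

-- Stated for a bare map rather than a `Derivation R A A`: in `Derivation ℂ ℂ⸨X⸩ ℂ⸨X⸩` the
-- target carries the coefficientwise `ℂ`-module structure, which is not definitionally the one
-- induced by the `ℂ`-algebra structure.
theorem Algebra.mapsTo_adjoin_of_leibniz {D : A → A} (map_add : ∀ x y, D (x + y) = D x + D y)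
    (leibniz : ∀ x y, D (x * y) = x * D y + y * D x)
    (map_algebraMap : ∀ r, D (algebraMap R A r) = 0)
    {s : Set A} (hs : Set.MapsTo D s (adjoin R s)) :
    Set.MapsTo D (adjoin R s) (adjoin R s) := by
  intro x hx
  induction hx using Algebra.adjoin_induction with
  | mem x hx => exact hs hx
  | algebraMap r => simp [map_algebraMap]
  | add x y _ _ hx hy => simpa [map_add] using add_mem hx hy
  | mul x y hx' hy' hx hy => simpa [leibniz] using add_mem (mul_mem hx' hy) (mul_mem hy' hx)

theorem exists_eq_aeval_mul_pow_of_mem_adjoin {e w : A} {q : R[X]} (hw : aeval e q * w = 1)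
    {x : A} (hx : x ∈ adjoin R {e, w}) : ∃ (p : R[X]) (r : ℕ), x = aeval e p * w ^ r := by
  induction hx using Algebra.adjoin_induction with
  | mem x hx =>
    rcases hx with rfl | rfl
    · exact ⟨X, 0, by simp⟩
    · exact ⟨1, 1, by simp⟩
  | algebraMap r => exact ⟨C r, 0, by simp⟩
  | add x y _ _ hx hy =>
    obtain ⟨p₁, r₁, rfl⟩ := hx
    obtain ⟨p₂, r₂, rfl⟩ := hy
    refine ⟨p₁ * q ^ r₂ + p₂ * q ^ r₁, r₁ + r₂, ?_⟩
    have hpow (r : ℕ) : aeval e q ^ r * w ^ r = 1 := by rw [← mul_pow, hw, one_pow]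
    simp only [map_add, map_mul, map_pow]
    linear_combination (-(aeval e p₁ * w ^ r₁)) * hpow r₂ - aeval e p₂ * w ^ r₂ * hpow r₁
  | mul x y _ _ hx hy =>
    obtain ⟨p₁, r₁, rfl⟩ := hx
    obtain ⟨p₂, r₂, rfl⟩ := hy
    exact ⟨p₁ * p₂, r₁ + r₂, by rw [map_mul, _root_.pow_add]; ring⟩

end Adjoin

namespace PowerSeries

variable {A S : Type*} [CommRing A] [SetLike S A] [SubringClass S A] {s : S} {φ ψ : A⟦X⟧}

theorem coeff_mul_mem (hφ : ∀ n, coeff n φ ∈ s) (hψ : ∀ n, coeff n ψ ∈ s) (n : ℕ) :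
    coeff n (φ * ψ) ∈ s := by
  rw [coeff_mul]
  exact sum_mem fun ij _ => mul_mem (hφ ij.1) (hψ ij.2)

theorem coeff_mul_sub_extremes_mem {n : ℕ} (hn : 0 < n) (hφ : ∀ j < n, coeff j φ ∈ s)
    (hψ : ∀ j < n, coeff j ψ ∈ s) :
    coeff n (φ * ψ) - (coeff 0 φ * coeff n ψ + coeff n φ * coeff 0 ψ) ∈ s := by
  obtain ⟨m, rfl⟩ := Nat.exists_eq_succ_of_ne_zero hn.ne'
  rw [coeff_mul, Finset.Nat.sum_antidiagonal_eq_sum_range_succ_mk, Finset.sum_range_succ,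
    Finset.sum_range_succ', Nat.sub_zero, Nat.sub_self, add_sub_add_comm, sub_self, add_zero,
    add_sub_cancel_right]
  exact sum_mem fun k hk => mul_mem (hφ _ (by simp at hk; omega)) (hψ _ (by omega))

end PowerSeries

namespace LaurentSeries

open HahnSeries

variable {R : Type*} [CommRing R]

def eulerOp : LaurentSeries R →ₗ[R] LaurentSeries R where
  toFun f := ⟨fun n => n • f.coeff n, f.isPWO_support.mono
    (Function.support_subset_iff'.2 fun n hn => by simp_all [HahnSeries.mem_support])⟩
  map_add' f g := by ext; simp [smul_add]
  map_smul' r f := by ext; simp [mul_left_comm]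

@[simp]
theorem eulerOp_coeff (f : LaurentSeries R) (n : ℤ) : (eulerOp f).coeff n = n • f.coeff n :=
  rfl

theorem support_eulerOp_subset (f : LaurentSeries R) : (eulerOp f).support ⊆ f.support :=
  Function.support_subset_iff'.2 fun n hn => by simp_all [HahnSeries.mem_support]

theorem eulerOp_mul (f g : LaurentSeries R) :
    eulerOp (f * g) = eulerOp f * g + f * eulerOp g := by
  ext n
  rw [coeff_add, eulerOp_coeff, coeff_mul_left' f.isPWO_support (support_eulerOp_subset f),
    coeff_mul_right' g.isPWO_support (support_eulerOp_subset g), coeff_mul,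
    ← Finset.sum_add_distrib, Finset.smul_sum]
  refine Finset.sum_congr rfl fun ij hij => ?_
  rw [eulerOp_coeff, eulerOp_coeff, ← (Finset.mem_antidiagonal.1 hij).2.2, add_smul,
    smul_mul_assoc, mul_smul_comm]

theorem derivative_eq_single_mul_eulerOp (f : LaurentSeries R) :
    derivative R f = single (-1) 1 * eulerOp f := by
  ext n
  rw [derivative_apply, hasseDeriv_coeff, coeff_single_mul, one_mul, eulerOp_coeff,
    sub_neg_eq_add, Nat.cast_one, Ring.choose_one_right]

theorem algebraMap_eq_C (r : R) : algebraMap R (LaurentSeries R) r = HahnSeries.C r := by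
  rw [HahnSeries.algebraMap_apply', PowerSeries.algebraMap_apply, Algebra.algebraMap_self,
    RingHom.id_apply, ofPowerSeries_C]

-- `c • f` is the coefficientwise action, not definitionally the one of the `R`-algebra structure
-- (which goes through `R⟦X⟧`), so `Subalgebra.smul_mem` does not apply to it.
theorem smul_mem_subalgebra (S : Subalgebra R R⸨X⸩) (c : R) {f : R⸨X⸩} (hf : f ∈ S) :
    c • f ∈ S := by
  rw [← C_mul_eq_smul, ← algebraMap_eq_C]
  exact mul_mem (S.algebraMap_mem c) hf

variable (R) in
def derivation : Derivation R R⸨X⸩ R⸨X⸩ where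
  __ := derivative R (V := R)
  map_smul' r f := by
    simp only [Algebra.smul_def, algebraMap_eq_C, C_mul_eq_smul, RingHom.id_apply]
    exact (derivative R).map_smul r f
  map_one_eq_zero' := by
    change derivative R (single 0 1) = 0
    rw [derivative_apply, hasseDeriv_single, Nat.cast_one, Ring.choose_one_right, zero_smul,
      single_eq_zero]
  leibniz' f g := by
    change derivative R (f * g) = f * derivative R g + g * derivative R f
    simp only [derivative_eq_single_mul_eulerOp, eulerOp_mul]
    ring

@[simp]
theorem coe_derivation : ⇑(derivation R) = derivative R (V := R) :=
  rfl

end LaurentSeries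

open HahnSeries LaurentSeries

theorem coeff_ofPowerSeries_psDeriv (p : PowerSeries ℂ) (m : ℤ) :
    (ofPowerSeries ℤ ℂ (psDeriv p)).coeff (m - 1) = m * (ofPowerSeries ℤ ℂ p).coeff m := by
  obtain ⟨k, rfl | rfl⟩ := Int.eq_nat_or_neg m
  · cases k with
    | zero => simp [PowerSeries.coeff_coe]
    | succ k =>
      rw [Nat.cast_succ, add_sub_cancel_right, PowerSeries.coeff_coe, PowerSeries.coeff_coe,
        if_neg (by omega), if_neg (by omega), Int.natAbs_natCast,
        show ((k : ℤ) + 1).natAbs = k + 1 by omega]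
      simp [psDeriv]
  · rcases eq_or_ne k 0 with rfl | hk
    · simp [PowerSeries.coeff_coe]
    · simp [PowerSeries.coeff_coe, hk, show -(k : ℤ) - 1 < 0 by omega]

theorem lsDeriv_eq_derivative (f : LaurentSeries ℂ) : lsDeriv f = derivative ℂ f := by
  ext n
  have hpart (m : ℤ) : (ofPowerSeries ℤ ℂ f.powerSeriesPart).coeff m = f.coeff (m + f.order) := by
    rw [ofPowerSeries_powerSeriesPart, coeff_single_mul, sub_neg_eq_add, one_mul]
  rw [lsDeriv, coeff_add, coeff_single_mul, coeff_single_mul, one_mul, hpart,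
    show n - f.order = n + 1 - f.order - 1 by ring, coeff_ofPowerSeries_psDeriv, hpart,
    derivative_apply, hasseDeriv_coeff, Nat.cast_one, Ring.choose_one_right, zsmul_eq_mul,
    show n - (f.order - 1) + f.order = n + 1 by ring,
    show n + 1 - f.order + f.order = n + 1 by ring]
  push_cast
  ring

theorem derivative_expNegU : derivative ℂ expNegU = -expNegU := by
  ext n
  rw [derivative_apply, hasseDeriv_coeff, Nat.cast_one, Ring.choose_one_right, coeff_neg,
    expNegU, PowerSeries.coeff_coe, PowerSeries.coeff_coe, zsmul_eq_mul]
  rcases lt_trichotomy n (-1) with hn | rfl | hn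
  · rw [if_pos (by omega), if_pos (by omega)]
    simp
  · simp
  obtain ⟨k, rfl⟩ := Int.eq_ofNat_of_zero_le (by omega : 0 ≤ n)
  rw [if_neg (by omega), if_neg (by omega), Int.natAbs_natCast,
    show ((k : ℤ) + 1).natAbs = k + 1 by omega]
  simp only [PowerSeries.coeff_rescale, PowerSeries.coeff_exp, Nat.factorial_succ]
  push_cast
  field_simp
  ring

theorem one_sub_expNegU_ne_zero : 1 - expNegU ≠ 0 := by
  intro h
  have h1 := congrArg (HahnSeries.coeff · 1) h
  simp [expNegU, HahnSeries.coeff_one, PowerSeries.coeff_coe, PowerSeries.coeff_rescale] at h1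

def expNegUSubalgebra : Subalgebra ℂ (LaurentSeries ℂ) :=
  Algebra.adjoin ℂ {expNegU, (1 - expNegU)⁻¹}

theorem expNegU_mem_expNegUSubalgebra : expNegU ∈ expNegUSubalgebra :=
  Algebra.subset_adjoin (by simp)

theorem inv_one_sub_expNegU_mem_expNegUSubalgebra : (1 - expNegU)⁻¹ ∈ expNegUSubalgebra :=
  Algebra.subset_adjoin (by simp)

theorem mapsTo_lsDeriv_expNegUSubalgebra :
    Set.MapsTo lsDeriv expNegUSubalgebra expNegUSubalgebra := by
  have hD : lsDeriv = derivation ℂ := funext fun f => by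
    rw [coe_derivation, lsDeriv_eq_derivative]
  rw [hD]
  refine Algebra.mapsTo_adjoin_of_leibniz (map_add _)
    (fun x y => by rw [Derivation.leibniz, smul_eq_mul, smul_eq_mul])
    (Derivation.map_algebraMap _) ?_
  rintro x (rfl | rfl)
  · rw [coe_derivation, derivative_expNegU]
    exact neg_mem expNegU_mem_expNegUSubalgebra
  · rw [Derivation.leibniz_inv, Derivation.map_sub, Derivation.map_one_eq_zero, coe_derivation,
      derivative_expNegU, zero_sub, neg_neg, smul_eq_mul]
    exact mul_mem (neg_mem (pow_mem inv_one_sub_expNegU_mem_expNegUSubalgebra 2))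
      expNegU_mem_expNegUSubalgebra

section TaylorShift

open PowerSeries

variable {S : Subalgebra ℂ (LaurentSeries ℂ)} (hS : Set.MapsTo lsDeriv S S)
include hS

theorem smul_iterate_lsDeriv_mem (c : ℂ) (m : ℕ) {x : LaurentSeries ℂ} (hx : x ∈ S) :
    c • lsDeriv^[m] x ∈ S :=
  smul_mem_subalgebra S c (hS.iterate m hx)

theorem coeff_shiftInv_mem (hw : (1 - expNegU)⁻¹ ∈ S) (a : ℂ) (l : ℕ) :
    coeff l (shiftInv a) ∈ S := by
  rw [shiftInv, coeff_mk]
  exact smul_iterate_lsDeriv_mem hS _ _ hw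

theorem coeff_taylorShift_sub_mem (κ : ℂ) {g : (LaurentSeries ℂ)⟦X⟧} {n : ℕ}
    (hg : ∀ j < n, coeff j g ∈ S) : coeff n (taylorShift κ g) - coeff n g ∈ S := by
  rw [taylorShift, coeff_mk, Finset.sum_range_succ', pow_zero, Nat.factorial_zero, Nat.cast_one,
    div_one, one_smul, Function.iterate_zero_apply, Nat.sub_zero, add_sub_cancel_right]
  exact sum_mem fun m hm =>
    smul_iterate_lsDeriv_mem hS _ _ (hg _ (by simp at hm; omega))

theorem coeff_mem_of_coeff_mul_taylorShift_mem (κ : ℂ) {g : (LaurentSeries ℂ)⟦X⟧}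
    (hg₀ : coeff 0 g ∈ S) (hg₀_inv : (coeff 0 g)⁻¹ ∈ S) (hg₀_ne : coeff 0 g ≠ 0)
    (hprod : ∀ n, coeff n (g * taylorShift κ g) ∈ S) (n : ℕ) : coeff n g ∈ S := by
  induction n using Nat.strong_induction_on with
  | _ n ih =>
  rcases Nat.eq_zero_or_pos n with rfl | hn
  · exact hg₀
  have hshift : ∀ j < n, coeff j (taylorShift κ g) ∈ S := fun j hj => by
    simpa using add_mem (coeff_taylorShift_sub_mem hS κ fun i hi => ih i (hi.trans hj)) (ih j hj)
  have hshift₀ : coeff 0 (taylorShift κ g) = coeff 0 g := by simp [taylorShift]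
  -- The two extreme terms of the `n`-th coefficient of the product are `g₀ (gₙ + lower terms)`
  -- and `gₙ g₀`.
  have htwice : 2 * coeff 0 g * coeff n g ∈ S := by
    have := sub_mem (sub_mem (hprod n) (coeff_mul_sub_extremes_mem hn ih hshift))
      (mul_mem hg₀ (coeff_taylorShift_sub_mem hS κ ih))
    rw [hshift₀] at this
    convert this using 1
    ring
  have htwo : (2 : LaurentSeries ℂ)⁻¹ ∈ S := by
    simpa [map_ofNat] using S.algebraMap_mem (2⁻¹ : ℂ)
  have htwo_ne : (2 : LaurentSeries ℂ) ≠ 0 := by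
    simpa [map_ofNat] using (map_ne_zero (algebraMap ℂ (LaurentSeries ℂ))).2 two_ne_zero
  rw [show coeff n g = (2 : LaurentSeries ℂ)⁻¹ * (coeff 0 g)⁻¹ * (2 * coeff 0 g * coeff n g) by
    field_simp]
  exact mul_mem (mul_mem htwo hg₀_inv) htwice

end TaylorShift

theorem stmt4_general (κ : ℂ) (g : PowerSeries (LaurentSeries ℂ))
    (hg0 : PowerSeries.coeff 0 g = ((1 - expNegU)⁻¹) ^ 2)
    (hg : g * taylorShift κ g = shiftInv 1 * shiftInv (-1) * shiftInv κ * shiftInv (-κ)) :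
    ∃ (p : ℕ → Polynomial ℂ) (r : ℕ → ℕ), ∀ l : ℕ,
      PowerSeries.coeff l g =
        Polynomial.aeval expNegU (p l) * ((1 - expNegU)⁻¹) ^ (r l) := by
  have hS := mapsTo_lsDeriv_expNegUSubalgebra
  have he := expNegU_mem_expNegUSubalgebra
  have hw := inv_one_sub_expNegU_mem_expNegUSubalgebra
  have hshiftInv := coeff_shiftInv_mem hS hw
  have hrhs := PowerSeries.coeff_mul_mem (PowerSeries.coeff_mul_mem
    (PowerSeries.coeff_mul_mem (hshiftInv 1) (hshiftInv (-1))) (hshiftInv κ)) (hshiftInv (-κ))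
  have hmem : ∀ l, PowerSeries.coeff l g ∈ expNegUSubalgebra :=
    coeff_mem_of_coeff_mul_taylorShift_mem hS κ (hg0 ▸ pow_mem hw 2)
      (by rw [hg0, ← inv_pow, inv_inv]; exact pow_mem (sub_mem (one_mem _) he) 2)
      (hg0 ▸ pow_ne_zero 2 (inv_ne_zero one_sub_expNegU_ne_zero)) (hg ▸ hrhs)
  choose p r hpr using fun l => exists_eq_aeval_mul_pow_of_mem_adjoin (q := 1 - Polynomial.X)
    (by simp [mul_inv_cancel₀ one_sub_expNegU_ne_zero]) (hmem l)
  exact ⟨p, r, hpr⟩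

/-- the unique solution `g(u,h) ∈ ℂ((u))[[h]]` of
`g(u,h) g(u+κh,h) = 1/((1-e^{-u-h})(1-e^{-u+h})(1-e^{-u-κh})(1-e^{-u+κh}))`
with `g(u,0) = (1-e^{-u})⁻²` admits the form
`g(u,h) = ∑_{l ≥ 0} p_l(e^{-u})/(1-e^{-u})^{r_l} h^l`
for some polynomials `p_l ∈ ℂ[z]` and nonnegative integers `r_l`. -/
theorem stmt4 (κ : ℂ) (hκ : κ ≠ 0) (g : PowerSeries (LaurentSeries ℂ))
    (hg0 : PowerSeries.coeff 0 g = ((1 - expNegU)⁻¹) ^ 2)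
    (hg : g * taylorShift κ g = shiftInv 1 * shiftInv (-1) * shiftInv κ * shiftInv (-κ)) :
    ∃ (p : ℕ → Polynomial ℂ) (r : ℕ → ℕ), ∀ l : ℕ,
      PowerSeries.coeff l g =
        Polynomial.aeval expNegU (p l) * ((1 - expNegU)⁻¹) ^ (r l) :=
  stmt4_general κ g hg0 hg

end
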